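/- arXiv:2212.07944 — 4 statements merged into one kernel-verified Lean document; each statement's English description precedes it below -/
import Mathlib

section
/- Let n, d be positive integers, let X ∈ ℝ^{n×d} be a data matrix whose rows are x_1, …, x_n ∈ ℝ^d, and let ℙ_n = (1/n)∑_{t=1}^n δ_{x_t} be the empirical probability measure on ℝ^d. Fix δ ≥ 0 and B ∈ ℝ^{d×d}. Then for every Borel probability measure ℙ on ℝ^d for which there exists a probability measure π on ℝ^d × ℝ^d with first marginal ℙ, second marginal ℙ_n, and ∫ ‖u − w‖_2^2 dπ(u,w) ≤ δ, one has ∫ ‖x − Bᵀx‖_2^2 dℙ(x) ≤ ( (1/√n)‖X − XB‖_F + √δ ‖I − B‖_2 )^2, where ‖·‖_F is the Frobenius norm and ‖·‖_2 is the spectral (ℓ2 operator) norm of a matrix. -/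
/-!
With `L u = u - Bᵀu = (I - B)ᵀu`, every pair `(u, w)` satisfies `‖L u‖ ≤ ‖L w‖ + ‖L‖ ‖u - w‖`.
Minkowski's inequality in `L²(π)` then bounds the `L²(ℙ)` norm of `L` by its `L²(ℙₙ)` norm plus
`‖I - B‖₂ √δ`. The rows of `X (I - B)` are the vectors `L xₜ`, so the `L²(ℙₙ)` norm of `L` is
`‖X - XB‖_F / √n`.
-/

open MeasureTheory Matrix
open scoped ENNReal NNReal

noncomputable def frobNorm {m n : ℕ} (M : Matrix (Fin m) (Fin n) ℝ) : ℝ :=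
  Real.sqrt (∑ i, ∑ j, (M i j) ^ 2)

noncomputable def specNorm {m n : ℕ} (M : Matrix (Fin m) (Fin n) ℝ) : ℝ :=
  ‖(Matrix.toEuclideanLin M).toContinuousLinearMap‖

theorem lintegral_ofReal_norm_sq_eq_eLpNorm_sq {α F : Type*} [MeasurableSpace α]
    [SeminormedAddCommGroup F] (f : α → F) (μ : Measure α) :
    ∫⁻ a, ENNReal.ofReal (‖f a‖ ^ 2) ∂μ = eLpNorm f 2 μ ^ 2 := by
  have h := eLpNorm_nnreal_pow_eq_lintegral (f := f) (μ := μ) (p := 2) two_ne_zero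
  norm_num [ENNReal.rpow_natCast] at h
  rw [h]
  simp_rw [← ofReal_norm, ← ENNReal.ofReal_pow (norm_nonneg _)]

theorem eLpNorm_le_ofReal_sqrt {α F : Type*} [MeasurableSpace α] [SeminormedAddCommGroup F]
    {f : α → F} {μ : Measure α} {δ : ℝ} (hδ : 0 ≤ δ)
    (h : ∫⁻ a, ENNReal.ofReal (‖f a‖ ^ 2) ∂μ ≤ ENNReal.ofReal δ) :
    eLpNorm f 2 μ ≤ ENNReal.ofReal √δ := by
  rwa [← ENNReal.pow_le_pow_left_iff two_ne_zero, ← lintegral_ofReal_norm_sq_eq_eLpNorm_sq,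
    ← ENNReal.ofReal_pow (Real.sqrt_nonneg _), Real.sq_sqrt hδ]

theorem lintegral_smul_sum_dirac {α ι : Type*} [MeasurableSpace α] [MeasurableSingletonClass α]
    [Fintype ι] (c : ℝ≥0∞) (x : ι → α) (g : α → ℝ≥0∞) :
    ∫⁻ a, g a ∂(c • ∑ t, Measure.dirac (x t)) = c * ∑ t, g (x t) := by
  simp [lintegral_smul_measure, lintegral_dirac]

theorem eLpNorm_map_fst_le_of_lipschitzWith {E F : Type*} [NormedAddCommGroup E]
    [MeasurableSpace E] [OpensMeasurableSpace E] [SecondCountableTopology E]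
    [NormedAddCommGroup F] {K : ℝ≥0} {f : E → F} (hf : LipschitzWith K f)
    (π : Measure (E × E)) {p : ℝ≥0∞} (hp : 1 ≤ p) :
    eLpNorm f p (π.map Prod.fst) ≤
      eLpNorm f p (π.map Prod.snd) + K * eLpNorm (fun q : E × E => q.1 - q.2) p π := by
  have hfc := hf.continuous
  rw [eLpNorm_map_measure hfc.aestronglyMeasurable measurable_fst.aemeasurable,
    eLpNorm_map_measure hfc.aestronglyMeasurable measurable_snd.aemeasurable]
  have hdiff : eLpNorm (fun q : E × E => f q.1 - f q.2) p π
      ≤ K * eLpNorm (fun q : E × E => q.1 - q.2) p π := by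
    refine eLpNorm_le_mul_eLpNorm_of_ae_le_mul' (ae_of_all _ fun q => ?_) p
    simpa only [edist_eq_enorm_sub] using hf q.1 q.2
  calc eLpNorm (f ∘ Prod.fst) p π
      = eLpNorm (f ∘ Prod.snd + fun q : E × E => f q.1 - f q.2) p π := by
        congr 1; ext q; simp
    _ ≤ eLpNorm (f ∘ Prod.snd) p π + eLpNorm (fun q : E × E => f q.1 - f q.2) p π :=
        eLpNorm_add_le (hfc.comp continuous_snd).aestronglyMeasurable
          ((hfc.comp continuous_fst).sub (hfc.comp continuous_snd)).aestronglyMeasurable hp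
    _ ≤ _ := by gcongr

theorem frobNorm_nonneg {m n : ℕ} (M : Matrix (Fin m) (Fin n) ℝ) : 0 ≤ frobNorm M :=
  Real.sqrt_nonneg _

theorem specNorm_nonneg {m n : ℕ} (M : Matrix (Fin m) (Fin n) ℝ) : 0 ≤ specNorm M :=
  norm_nonneg _

theorem specNorm_transpose {m n : ℕ} (M : Matrix (Fin m) (Fin n) ℝ) :
    specNorm Mᵀ = specNorm M := by
  rw [specNorm, specNorm, ← conjTranspose_eq_transpose_of_trivial,
    toEuclideanLin_conjTranspose_eq_adjoint, LinearMap.adjoint_toContinuousLinearMap]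
  exact ContinuousLinearMap.adjoint.norm_map _

section Rows

variable {m n k : ℕ} {X : Matrix (Fin m) (Fin n) ℝ} {x : Fin m → EuclideanSpace ℝ (Fin n)}

theorem toEuclideanLin_transpose_apply_eq_mul_apply (hX : ∀ t i, X t i = x t i)
    (M : Matrix (Fin n) (Fin k) ℝ) (t : Fin m) (i : Fin k) :
    toEuclideanLin Mᵀ (x t) i = (X * M) t i := by
  simp [toLpLin_apply, mulVec, dotProduct, mul_apply, hX, mul_comm]

theorem sum_norm_sq_toEuclideanLin_transpose (hX : ∀ t i, X t i = x t i)
    (M : Matrix (Fin n) (Fin k) ℝ) :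
    ∑ t, ‖toEuclideanLin Mᵀ (x t)‖ ^ 2 = frobNorm (X * M) ^ 2 := by
  rw [frobNorm, Real.sq_sqrt (by positivity)]
  simp_rw [EuclideanSpace.norm_sq_eq, Real.norm_eq_abs, sq_abs,
    toEuclideanLin_transpose_apply_eq_mul_apply hX]

theorem eLpNorm_toEuclideanLin_transpose_empirical (hm : 0 < m) (hX : ∀ t i, X t i = x t i)
    (M : Matrix (Fin n) (Fin k) ℝ) :
    eLpNorm (toEuclideanLin Mᵀ) 2 ((m : ℝ≥0∞)⁻¹ • ∑ t, Measure.dirac (x t))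
      = ENNReal.ofReal (1 / √m * frobNorm (X * M)) := by
  refine (ENNReal.pow_right_strictMono two_ne_zero).injective ?_
  have hF := frobNorm_nonneg (X * M)
  rw [← lintegral_ofReal_norm_sq_eq_eLpNorm_sq, lintegral_smul_sum_dirac,
    ← ENNReal.ofReal_sum_of_nonneg (fun t _ => by positivity),
    sum_norm_sq_toEuclideanLin_transpose hX, ← ENNReal.ofReal_pow (by positivity), mul_pow,
    div_pow, one_pow, Real.sq_sqrt (Nat.cast_nonneg _), ← ENNReal.ofReal_natCast,
    ← ENNReal.ofReal_inv_of_pos (by positivity), ← ENNReal.ofReal_mul (by positivity), one_div]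

end Rows

theorem stmt_0_general {n d : ℕ} (hn : 0 < n)
    (X : Matrix (Fin n) (Fin d) ℝ) (x : Fin n → EuclideanSpace ℝ (Fin d))
    (hX : ∀ t i, X t i = x t i)
    (δ : ℝ) (hδ : 0 ≤ δ) (B : Matrix (Fin d) (Fin d) ℝ)
    (P : Measure (EuclideanSpace ℝ (Fin d)))
    (π : Measure (EuclideanSpace ℝ (Fin d) × EuclideanSpace ℝ (Fin d)))
    (hfst : π.map Prod.fst = P)
    (hsnd : π.map Prod.snd = (n : ℝ≥0∞)⁻¹ • ∑ t : Fin n, Measure.dirac (x t))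
    (hcost : ∫⁻ p, ENNReal.ofReal (‖p.1 - p.2‖ ^ 2) ∂π ≤ ENNReal.ofReal δ) :
    ∫⁻ u, ENNReal.ofReal (‖u - Matrix.toEuclideanLin Bᵀ u‖ ^ 2) ∂P
      ≤ ENNReal.ofReal
          (((1 / Real.sqrt n) * frobNorm (X - X * B)
            + Real.sqrt δ * specNorm ((1 : Matrix (Fin d) (Fin d) ℝ) - B)) ^ 2) := by
  set L := (toEuclideanLin (1 - B)ᵀ).toContinuousLinearMap
  have hL : ∀ u, u - toEuclideanLin Bᵀ u = L u := fun u => by simp [L, transpose_sub]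
  have hempirical :
      eLpNorm L 2 (π.map Prod.snd) = ENNReal.ofReal (1 / √n * frobNorm (X - X * B)) := by
    rw [hsnd, show X - X * B = X * (1 - B) by rw [Matrix.mul_sub, Matrix.mul_one]]
    exact eLpNorm_toEuclideanLin_transpose_empirical hn hX (1 - B)
  have hLnorm : (‖L‖₊ : ℝ≥0∞) = ENNReal.ofReal (specNorm (1 - B)) := by
    rw [← specNorm_transpose, specNorm, ofReal_norm, enorm_eq_nnnorm]
  have hF := frobNorm_nonneg (X - X * B)
  have hS := specNorm_nonneg (1 - B)
  calc ∫⁻ u, ENNReal.ofReal (‖u - toEuclideanLin Bᵀ u‖ ^ 2) ∂P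
      = eLpNorm L 2 P ^ 2 := by
        simp_rw [hL]
        exact lintegral_ofReal_norm_sq_eq_eLpNorm_sq L P
    _ ≤ (ENNReal.ofReal (1 / √n * frobNorm (X - X * B))
          + ENNReal.ofReal (specNorm (1 - B)) * ENNReal.ofReal √δ) ^ 2 := by
        rw [← hfst, ← hempirical, ← hLnorm]
        gcongr
        exact (eLpNorm_map_fst_le_of_lipschitzWith L.lipschitz π one_le_two).trans
          (by gcongr; exact eLpNorm_le_ofReal_sqrt hδ hcost)
    _ = _ := by
        rw [← ENNReal.ofReal_mul (by positivity), ← ENNReal.ofReal_add (by positivity)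
          (by positivity), ← ENNReal.ofReal_pow (by positivity), mul_comm (specNorm _)]

/-- **Theorem 1 (DRO relaxation).** For every probability measure `P` within transport
cost `δ` (quadratic cost) of the empirical measure `ℙ_n = (1/n)∑ δ_{x_t}`, the expected
nodewise regression loss `∫ ‖x - Bᵀx‖² dP` is bounded by
`((1/√n)‖X - XB‖_F + √δ ‖I - B‖₂)²`. -/
theorem stmt_0 {n d : ℕ} (hn : 0 < n) (hd : 0 < d)
    (X : Matrix (Fin n) (Fin d) ℝ) (x : Fin n → EuclideanSpace ℝ (Fin d))
    (hX : ∀ t i, X t i = x t i)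
    (δ : ℝ) (hδ : 0 ≤ δ) (B : Matrix (Fin d) (Fin d) ℝ)
    (P : Measure (EuclideanSpace ℝ (Fin d))) [IsProbabilityMeasure P]
    (π : Measure (EuclideanSpace ℝ (Fin d) × EuclideanSpace ℝ (Fin d)))
    [IsProbabilityMeasure π]
    (hfst : π.map Prod.fst = P)
    (hsnd : π.map Prod.snd = (n : ℝ≥0∞)⁻¹ • ∑ t : Fin n, Measure.dirac (x t))
    (hcost : ∫⁻ p, ENNReal.ofReal (‖p.1 - p.2‖ ^ 2) ∂π ≤ ENNReal.ofReal δ) :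
    ∫⁻ u, ENNReal.ofReal (‖u - Matrix.toEuclideanLin Bᵀ u‖ ^ 2) ∂P
      ≤ ENNReal.ofReal
          (((1 / Real.sqrt n) * frobNorm (X - X * B)
            + Real.sqrt δ * specNorm ((1 : Matrix (Fin d) (Fin d) ℝ) - B)) ^ 2) :=
  stmt_0_general hn X x hX δ hδ B P π hfst hsnd hcost
end

section
/- Let x_1, …, x_n ∈ ℝ^d be the rows of a data matrix X ∈ ℝ^{n×d}, fix B ∈ ℝ^{d×d} and δ > 0, set H = I − B, and define φ_γ(x) = sup_{u ∈ ℝ^d} { uᵀHHᵀu − γ‖u − x‖_2^2 } ∈ [0, ∞] for γ ≥ 0. Then inf_{γ ≥ 0} { γδ + (1/n)∑_{t=1}^n φ_γ(x_t) } ≤ ( (1/√n)‖X − XB‖_F + √δ ‖I − B‖_2 )², where ‖·‖_F is the Frobenius norm and ‖·‖_2 is the spectral norm. -/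
open MeasureTheory Matrix
open scoped RealInnerProductSpace ENNReal

set_option maxHeartbeats 1000000 in
/-- **Dual-side bound in the proof of Theorem 1.** With `H = I - B` and
`φ_γ(x) = sup_u { uᵀHHᵀu - γ‖u - x‖² } ∈ [0, ∞]`, the dual objective satisfies
`inf_{γ ≥ 0} { γδ + (1/n)∑_t φ_γ(x_t) } ≤ ((1/√n)‖X - XB‖_F + √δ ‖I - B‖₂)²`. -/
theorem stmt_7 {n d : ℕ} (hn : 0 < n)
    (X : Matrix (Fin n) (Fin d) ℝ) (x : Fin n → EuclideanSpace ℝ (Fin d))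
    (hX : ∀ t i, X t i = x t i)
    (B : Matrix (Fin d) (Fin d) ℝ) (δ : ℝ) (hδ : 0 < δ)
    (H : Matrix (Fin d) (Fin d) ℝ) (hH : H = 1 - B)
    (φ : ℝ → EuclideanSpace ℝ (Fin d) → ℝ≥0∞)
    (hφ : ∀ γ y, φ γ y = ⨆ u : EuclideanSpace ℝ (Fin d),
        ENNReal.ofReal (⟪u, Matrix.toEuclideanLin (H * Hᵀ) u⟫ - γ * ‖u - y‖ ^ 2)) :
    ⨅ (γ : ℝ) (_ : 0 ≤ γ),
        (ENNReal.ofReal (γ * δ) + (n : ℝ≥0∞)⁻¹ * ∑ t : Fin n, φ γ (x t))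
      ≤ ENNReal.ofReal
          (((1 / Real.sqrt n) * frobNorm (X - X * B)
            + Real.sqrt δ * specNorm ((1 : Matrix (Fin d) (Fin d) ℝ) - B)) ^ 2) := by
  subst hH
  set Hm : Matrix (Fin d) (Fin d) ℝ := 1 - B with hHm
  set T : EuclideanSpace ℝ (Fin d) →ₗ[ℝ] EuclideanSpace ℝ (Fin d) :=
    Matrix.toEuclideanLin Hmᵀ with hT
  set s : ℝ := specNorm Hm with hs
  have hs0 : 0 ≤ s := norm_nonneg _
  -- the operator norm of the transpose equals the spectral norm
  have hspecT : ∀ u : EuclideanSpace ℝ (Fin d), ‖T u‖ ≤ s * ‖u‖ := by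
    intro u
    have h1 : Hmᵀ = Hmᴴ := (Matrix.conjTranspose_eq_transpose_of_trivial Hm).symm
    have h2 : LinearMap.toContinuousLinearMap T =
        ContinuousLinearMap.adjoint
          (LinearMap.toContinuousLinearMap (Matrix.toEuclideanLin Hm)) := by
      rw [hT, h1, Matrix.toEuclideanLin_conjTranspose_eq_adjoint]
      rfl
    have h3 : ‖LinearMap.toContinuousLinearMap T‖ = s := by
      rw [h2, hs]
      exact ContinuousLinearMap.adjoint.norm_map _
    calc ‖T u‖ = ‖LinearMap.toContinuousLinearMap T u‖ := rfl
      _ ≤ ‖LinearMap.toContinuousLinearMap T‖ * ‖u‖ :=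
          (LinearMap.toContinuousLinearMap T).le_opNorm u
      _ = s * ‖u‖ := by rw [h3]
  -- the quadratic form
  have hquad : ∀ u : EuclideanSpace ℝ (Fin d),
      ⟪u, Matrix.toEuclideanLin (Hm * Hmᵀ) u⟫ = ‖T u‖ ^ 2 := by
    intro u
    have hadj : Matrix.toEuclideanLin Hm = LinearMap.adjoint T := by
      rw [hT, ← Matrix.toEuclideanLin_conjTranspose_eq_adjoint,
        Matrix.conjTranspose_eq_transpose_of_trivial, Matrix.transpose_transpose]
    have h1 : Matrix.toEuclideanLin (Hm * Hmᵀ) u = Matrix.toEuclideanLin Hm (T u) := by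
      simp [hT, Matrix.toEuclideanLin_apply, Matrix.mulVec_mulVec]
    rw [h1, hadj, LinearMap.adjoint_inner_right, real_inner_self_eq_norm_sq]
  set F : ℝ := (1 / Real.sqrt n) * frobNorm (X - X * B) with hFdef
  have hF0 : 0 ≤ F := mul_nonneg (by positivity) (Real.sqrt_nonneg _)
  set b : ℝ := Real.sqrt δ with hb
  have hb0 : 0 < b := Real.sqrt_pos.2 hδ
  have hbδ : b ^ 2 = δ := Real.sq_sqrt hδ.le
  -- Frobenius identity
  have hFrob : ∑ t : Fin n, ‖T (x t)‖ ^ 2 = frobNorm (X - X * B) ^ 2 := by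
    rw [frobNorm, Real.sq_sqrt (by positivity)]
    refine Finset.sum_congr rfl fun t _ => ?_
    rw [EuclideanSpace.norm_eq, Real.sq_sqrt (by positivity)]
    refine Finset.sum_congr rfl fun j _ => ?_
    have hentry : T (x t) j = (X - X * B) t j := by
      show (Hmᵀ *ᵥ (WithLp.equiv 2 _ (x t))) j = _
      simp only [Matrix.mulVec, dotProduct, Matrix.transpose_apply, hHm,
        Matrix.sub_apply, Matrix.mul_apply, Matrix.one_apply, sub_mul,
        Finset.sum_sub_distrib, ite_mul, one_mul, zero_mul, Finset.sum_ite_eq',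
        Finset.mem_univ, if_true, WithLp.equiv, Equiv.refl_apply]
      congr 1
      · exact (hX t j).symm
      · exact Finset.sum_congr rfl fun i _ => by rw [hX t i, mul_comm]; rfl
    rw [hentry, Real.norm_eq_abs, sq_abs]
  have hF2 : (n : ℝ) * F ^ 2 = ∑ t : Fin n, ‖T (x t)‖ ^ 2 := by
    rw [hFrob, hFdef, mul_pow, one_div, inv_pow,
      Real.sq_sqrt (Nat.cast_nonneg n : (0:ℝ) ≤ n)]
    field_simp
  clear_value T s F b
  apply ENNReal.le_of_forall_pos_le_add
  intro ε hε _
  have hε' : (0:ℝ) < ε := hε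
  obtain ⟨γ, hγdef⟩ : ∃ γ : ℝ, γ = s ^ 2 + s * F / b + (ε : ℝ) / δ := ⟨_, rfl⟩
  have hG : 0 < γ - s ^ 2 := by
    have h1 : 0 < (ε : ℝ) / δ := div_pos hε' hδ
    have h2 : 0 ≤ s * F / b := by positivity
    rw [hγdef]; linarith
  have hγ0 : 0 ≤ γ := le_trans (sq_nonneg s) (by linarith)
  refine le_trans (iInf₂_le γ hγ0) ?_
  -- pointwise bound on φ
  have hpt : ∀ y : EuclideanSpace ℝ (Fin d),
      φ γ y ≤ ENNReal.ofReal (γ * ‖T y‖ ^ 2 / (γ - s ^ 2)) := by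
    intro y
    rw [hφ]
    refine iSup_le fun u => ENNReal.ofReal_le_ofReal ?_
    have h1 : ‖T u‖ ≤ ‖T y‖ + s * ‖u - y‖ := by
      have he : T u = T y + T (u - y) := by rw [map_sub]; abel
      calc ‖T u‖ = ‖T y + T (u - y)‖ := by rw [← he]
        _ ≤ ‖T y‖ + ‖T (u - y)‖ := norm_add_le _ _
        _ ≤ ‖T y‖ + s * ‖u - y‖ := by have := hspecT (u - y); linarith
    rw [hquad u, le_div_iff₀ hG]
    have h2 : ‖T u‖ ^ 2 ≤ (‖T y‖ + s * ‖u - y‖) ^ 2 := by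
      nlinarith [norm_nonneg (T u)]
    nlinarith [sq_nonneg (s * ‖T y‖ - (γ - s ^ 2) * ‖u - y‖),
      mul_le_mul_of_nonneg_right h2 hG.le]
  -- sum bound
  have hsum : ∑ t : Fin n, φ γ (x t)
      ≤ ENNReal.ofReal (∑ t : Fin n, γ * ‖T (x t)‖ ^ 2 / (γ - s ^ 2)) := by
    rw [ENNReal.ofReal_sum_of_nonneg
      (fun t _ => div_nonneg (mul_nonneg hγ0 (sq_nonneg _)) hG.le)]
    exact Finset.sum_le_sum fun t _ => hpt (x t)
  have hninv : (n : ℝ≥0∞)⁻¹ = ENNReal.ofReal (1 / (n : ℝ)) := by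
    rw [one_div, ENNReal.ofReal_inv_of_pos (by exact_mod_cast hn), ENNReal.ofReal_natCast]
  have hSm : (1 / (n : ℝ)) * ∑ t : Fin n, γ * ‖T (x t)‖ ^ 2 / (γ - s ^ 2)
      = γ * F ^ 2 / (γ - s ^ 2) := by
    have hn' : ((n:ℝ)) ≠ 0 := by positivity
    rw [← Finset.sum_div, ← Finset.mul_sum, ← hF2,
      show γ * ((n:ℝ) * F ^ 2) = (n:ℝ) * (γ * F ^ 2) from by ring,
      mul_div_assoc, ← mul_assoc, one_div, inv_mul_cancel₀ hn', one_mul]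
  -- key real inequality
  have hGb : (γ - s ^ 2) * δ = s * F * b + ε := by
    rw [hγdef, ← hbδ]
    field_simp
    ring
  have hdiv : γ * F ^ 2 / (γ - s ^ 2) ≤ F ^ 2 + s * F * b := by
    rw [div_le_iff₀ hG]
    have h4' : s * F * b * ((γ - s ^ 2) * δ) = s * F * b * (s * F * b + ε) := by rw [hGb]
    have h4 : s ^ 2 * F ^ 2 * δ ≤ s * F * b * (γ - s ^ 2) * δ := by
      have hδb : s ^ 2 * F ^ 2 * δ = (s * F * b) ^ 2 := by rw [← hbδ]; ring
      nlinarith [h4', hδb, mul_nonneg (mul_nonneg (mul_nonneg hs0 hF0) hb0.le) hε'.le]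
    have h5 : s ^ 2 * F ^ 2 ≤ s * F * b * (γ - s ^ 2) :=
      le_of_mul_le_mul_right (by linarith) hδ
    nlinarith [h5]
  have hreal : γ * δ + γ * F ^ 2 / (γ - s ^ 2) ≤ (F + b * s) ^ 2 + ε := by
    have hγδ : γ * δ = s ^ 2 * δ + (s * F * b + ε) := by rw [← hGb]; ring
    nlinarith [hdiv, hγδ, hbδ]
  calc ENNReal.ofReal (γ * δ) + (n : ℝ≥0∞)⁻¹ * ∑ t : Fin n, φ γ (x t)
      ≤ ENNReal.ofReal (γ * δ) + ENNReal.ofReal (1 / (n : ℝ)) *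
          ENNReal.ofReal (∑ t : Fin n, γ * ‖T (x t)‖ ^ 2 / (γ - s ^ 2)) := by
        rw [hninv]; gcongr
    _ = ENNReal.ofReal (γ * δ +
          (1 / (n : ℝ)) * ∑ t : Fin n, γ * ‖T (x t)‖ ^ 2 / (γ - s ^ 2)) := by
        rw [← ENNReal.ofReal_mul (by positivity),
          ← ENNReal.ofReal_add (mul_nonneg hγ0 hδ.le) (by positivity)]
    _ ≤ ENNReal.ofReal ((F + b * s) ^ 2 + ε) := by
        refine ENNReal.ofReal_le_ofReal ?_
        rw [hSm]
        exact hreal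
    _ = ENNReal.ofReal ((F + b * s) ^ 2) + ε := by
        rw [ENNReal.ofReal_add (sq_nonneg _) ε.coe_nonneg, ENNReal.ofReal_coe_nnreal]
end

section
/- Let m, n, r be positive integers with r ≤ min(m,n), let U ∈ ℝ^{m×r} and V ∈ ℝ^{n×r} satisfy UᵀU = I_r and VᵀV = I_r, let σ_1 ≥ σ_2 ≥ … ≥ σ_r ≥ 0, let Σ = diag(σ_1,…,σ_r) ∈ ℝ^{r×r}, let C = UΣVᵀ ∈ ℝ^{m×n}, and let λ > 0. Then min_{B ∈ ℝ^{m×n}} { ‖B − C‖_F² + λ‖B‖_2 } = min_{t ≥ 0} { ∑_{j=1}^r (max(σ_j − t, 0))² + λt }, and for any t* attaining the right-hand minimum, the matrix B̂ = U Ŝ Vᵀ with Ŝ = diag(min(σ_1, t*), …, min(σ_r, t*)) attains the left-hand minimum. -/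
open Matrix

lemma frob_sq {m n : ℕ} (M : Matrix (Fin m) (Fin n) ℝ) :
    frobNorm M ^ 2 = ∑ i, ∑ j, (M i j) ^ 2 :=
  Real.sq_sqrt (Finset.sum_nonneg fun _ _ => Finset.sum_nonneg fun _ _ => sq_nonneg _)

lemma sumsq_trace {a b : ℕ} (M : Matrix (Fin a) (Fin b) ℝ) :
    ∑ i, ∑ j, (M i j) ^ 2 = Matrix.trace (Mᵀ * M) := by
  simp only [Matrix.trace, Matrix.diag, Matrix.mul_apply, Matrix.transpose_apply, sq]
  exact Finset.sum_comm

lemma conj_sumsq {m n r : ℕ} (U : Matrix (Fin m) (Fin r) ℝ) (V : Matrix (Fin n) (Fin r) ℝ)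
    (hU : Uᵀ * U = 1) (hV : Vᵀ * V = 1) (A : Matrix (Fin r) (Fin r) ℝ) :
    ∑ i, ∑ j, ((U * A * Vᵀ) i j) ^ 2 = ∑ i, ∑ j, (A i j) ^ 2 := by
  rw [sumsq_trace, sumsq_trace]
  have h1 : (U * A * Vᵀ)ᵀ * (U * A * Vᵀ) = V * (Aᵀ * A) * Vᵀ := by
    rw [Matrix.transpose_mul, Matrix.transpose_mul, Matrix.transpose_transpose]
    calc (Vᵀᵀ * (Aᵀ * Uᵀ)) * (U * A * Vᵀ) = V * Aᵀ * (Uᵀ * U) * A * Vᵀ := by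
          simp only [Matrix.transpose_transpose, Matrix.mul_assoc]
      _ = V * (Aᵀ * A) * Vᵀ := by rw [hU]; simp only [Matrix.mul_one, Matrix.mul_assoc]
  rw [h1]
  calc Matrix.trace (V * (Aᵀ * A) * Vᵀ) = Matrix.trace (Vᵀ * (V * (Aᵀ * A))) := by
        rw [Matrix.trace_mul_comm]
    _ = Matrix.trace (Aᵀ * A) := by rw [← Matrix.mul_assoc, hV, Matrix.one_mul]

lemma diag_sumsq {r : ℕ} (d : Fin r → ℝ) :
    ∑ i, ∑ j, ((Matrix.diagonal d) i j) ^ 2 = ∑ i, (d i) ^ 2 := by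
  simp [Matrix.diagonal_apply, apply_ite (· ^ 2)]

lemma bessel {m n r : ℕ} (U : Matrix (Fin m) (Fin r) ℝ) (V : Matrix (Fin n) (Fin r) ℝ)
    (hU : Uᵀ * U = 1) (hV : Vᵀ * V = 1) (M : Matrix (Fin m) (Fin n) ℝ) :
    ∑ j, ((Uᵀ * M * V) j j) ^ 2 ≤ ∑ a, ∑ b, (M a b) ^ 2 := by
  set c : Fin r → ℝ := fun j => (Uᵀ * M * V) j j with hc
  set X : Matrix (Fin m) (Fin n) ℝ := U * Matrix.diagonal c * Vᵀ with hX
  have h1 : ∑ a, ∑ b, (X a b) ^ 2 = ∑ j, (c j) ^ 2 := by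
    rw [hX, conj_sumsq U V hU hV, diag_sumsq]
  have h2 : ∑ a, ∑ b, M a b * X a b = ∑ j, (c j) ^ 2 := by
    have e1 : ∑ a, ∑ b, M a b * X a b = Matrix.trace (Mᵀ * X) := by
      simp only [Matrix.trace, Matrix.diag, Matrix.mul_apply, Matrix.transpose_apply]
      exact Finset.sum_comm
    rw [e1, hX]
    have e2 : Mᵀ * (U * Matrix.diagonal c * Vᵀ) = (Mᵀ * U * Matrix.diagonal c) * Vᵀ := by
      simp only [Matrix.mul_assoc]
    rw [e2, Matrix.trace_mul_comm]
    have e3 : Vᵀ * (Mᵀ * U * Matrix.diagonal c) = (Vᵀ * Mᵀ * U) * Matrix.diagonal c := by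
      simp only [Matrix.mul_assoc]
    rw [e3]
    have e4 : Matrix.trace ((Vᵀ * Mᵀ * U) * Matrix.diagonal c)
        = ∑ j, (Vᵀ * Mᵀ * U) j j * c j := by
      simp [Matrix.trace, Matrix.diag, Matrix.mul_diagonal]
    rw [e4]
    apply Finset.sum_congr rfl
    intro j _
    have e5 : (Vᵀ * Mᵀ * U) j j = (Uᵀ * M * V) j j := by
      have : Vᵀ * Mᵀ * U = (Uᵀ * M * V)ᵀ := by
        simp [Matrix.transpose_mul, Matrix.mul_assoc]
      rw [this, Matrix.transpose_apply]
    rw [e5, hc, sq]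
  have h3 : 0 ≤ ∑ a, ∑ b, (M a b - X a b) ^ 2 :=
    Finset.sum_nonneg fun a _ => Finset.sum_nonneg fun b _ => sq_nonneg _
  have h4 : ∑ a, ∑ b, (M a b - X a b) ^ 2
      = ∑ a, ∑ b, (M a b) ^ 2 - 2 * (∑ a, ∑ b, M a b * X a b) + ∑ a, ∑ b, (X a b) ^ 2 := by
    simp only [sub_sq, Finset.sum_add_distrib, Finset.sum_sub_distrib, Finset.mul_sum,
      Finset.sum_mul, mul_assoc]
  rw [h4, h1, h2] at h3
  linarith
lemma mulVec_isom {m r : ℕ} (U : Matrix (Fin m) (Fin r) ℝ) (hU : Uᵀ * U = 1)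
    (z : Fin r → ℝ) : ∑ i, ((U *ᵥ z) i) ^ 2 = ∑ j, (z j) ^ 2 := by
  have h : (U *ᵥ z) ⬝ᵥ (U *ᵥ z) = z ⬝ᵥ z := by
    rw [Matrix.dotProduct_mulVec, ← Matrix.mulVec_transpose, Matrix.mulVec_mulVec]
    rw [show Uᵀ * U = 1 from hU, Matrix.one_mulVec]
  simpa [dotProduct, sq] using h

lemma proj_bound {n r : ℕ} (V : Matrix (Fin n) (Fin r) ℝ) (hV : Vᵀ * V = 1)
    (x : Fin n → ℝ) : ∑ j, ((Vᵀ *ᵥ x) j) ^ 2 ≤ ∑ b, (x b) ^ 2 := by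
  set y := Vᵀ *ᵥ x with hy
  set s := ∑ j, (y j) ^ 2 with hs
  have hs0 : 0 ≤ s := Finset.sum_nonneg fun j _ => sq_nonneg _
  have hw : ∑ a, ((V *ᵥ y) a) ^ 2 = s := mulVec_isom V hV y
  have hxw : x ⬝ᵥ (V *ᵥ y) = s := by
    rw [Matrix.dotProduct_mulVec, ← Matrix.mulVec_transpose, ← hy]
    simp [dotProduct, hs, sq]
  have cs := Finset.sum_mul_sq_le_sq_mul_sq Finset.univ x (V *ᵥ y)
  rw [show ∑ i, x i * (V *ᵥ y) i = s from hxw, hw] at cs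
  rcases eq_or_lt_of_le hs0 with h0 | h0
  · rw [hs] at h0; linarith [h0 ▸ hs0, Finset.sum_nonneg (fun b (_ : b ∈ Finset.univ) => sq_nonneg (x b))]
  · have : s * s ≤ (∑ b, (x b) ^ 2) * s := by nlinarith
    exact le_of_mul_le_mul_right this h0

lemma euclid_norm {k : ℕ} (v : Fin k → ℝ) :
    ‖(WithLp.equiv 2 (Fin k → ℝ)).symm v‖ = Real.sqrt (∑ i, (v i) ^ 2) := by
  simp [EuclideanSpace.norm_eq, sq_abs]

lemma spec_apply {m n : ℕ} (M : Matrix (Fin m) (Fin n) ℝ) (v : Fin n → ℝ) :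
    (Matrix.toEuclideanLin M).toContinuousLinearMap ((WithLp.equiv 2 (Fin n → ℝ)).symm v) =
      (WithLp.equiv 2 (Fin m → ℝ)).symm (M *ᵥ v) := by
  simp [Matrix.toEuclideanLin_apply]

lemma le_specNorm {m n : ℕ} (M : Matrix (Fin m) (Fin n) ℝ) (v : Fin n → ℝ) :
    Real.sqrt (∑ i, ((M *ᵥ v) i) ^ 2) ≤ specNorm M * Real.sqrt (∑ b, (v b) ^ 2) := by
  have h := (Matrix.toEuclideanLin M).toContinuousLinearMap.le_opNorm
    ((WithLp.equiv 2 (Fin n → ℝ)).symm v)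
  rwa [spec_apply, euclid_norm, euclid_norm] at h

lemma specNorm_le {m n : ℕ} (M : Matrix (Fin m) (Fin n) ℝ) (c : ℝ) (hc : 0 ≤ c)
    (h : ∀ v : Fin n → ℝ, ∑ i, ((M *ᵥ v) i) ^ 2 ≤ c ^ 2 * ∑ b, (v b) ^ 2) :
    specNorm M ≤ c := by
  apply ContinuousLinearMap.opNorm_le_bound _ hc
  intro x
  have hx : x = (WithLp.equiv 2 (Fin n → ℝ)).symm ((WithLp.equiv 2 (Fin n → ℝ)) x) := rfl
  rw [hx, spec_apply, euclid_norm, euclid_norm]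
  set v := (WithLp.equiv 2 (Fin n → ℝ)) x
  calc Real.sqrt (∑ i, ((M *ᵥ v) i) ^ 2) ≤ Real.sqrt (c ^ 2 * ∑ b, (v b) ^ 2) :=
        Real.sqrt_le_sqrt (h v)
    _ = c * Real.sqrt (∑ b, (v b) ^ 2) := by
        rw [Real.sqrt_mul (sq_nonneg c), Real.sqrt_sq hc]

lemma dot_le_specNorm {m n : ℕ} (M : Matrix (Fin m) (Fin n) ℝ) (u : Fin m → ℝ) (v : Fin n → ℝ)
    (hu : ∑ a, (u a) ^ 2 = 1) (hv : ∑ b, (v b) ^ 2 = 1) :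
    u ⬝ᵥ (M *ᵥ v) ≤ specNorm M := by
  have cs := Finset.sum_mul_sq_le_sq_mul_sq Finset.univ u (M *ᵥ v)
  rw [hu, one_mul] at cs
  have h1 : u ⬝ᵥ (M *ᵥ v) ≤ Real.sqrt (∑ i, ((M *ᵥ v) i) ^ 2) := by
    have := Real.sqrt_le_sqrt cs
    rw [Real.sqrt_sq_eq_abs] at this
    calc u ⬝ᵥ (M *ᵥ v) ≤ |∑ i, u i * (M *ᵥ v) i| := le_abs_self _
      _ ≤ _ := this
  have h2 := le_specNorm M v
  rw [hv, Real.sqrt_one, mul_one] at h2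
  exact h1.trans h2

lemma entry_dot {m n r : ℕ} (U : Matrix (Fin m) (Fin r) ℝ) (V : Matrix (Fin n) (Fin r) ℝ)
    (B : Matrix (Fin m) (Fin n) ℝ) (j : Fin r) :
    (Uᵀ * B * V) j j = (fun a => U a j) ⬝ᵥ (B *ᵥ (fun b => V b j)) := by
  simp only [Matrix.mul_apply, Matrix.transpose_apply, Matrix.mulVec, dotProduct,
    Finset.sum_mul, Finset.mul_sum]
  rw [Finset.sum_comm]
  apply Finset.sum_congr rfl; intro a _
  apply Finset.sum_congr rfl; intro b _
  ring

lemma col_unit {m r : ℕ} (U : Matrix (Fin m) (Fin r) ℝ) (hU : Uᵀ * U = 1) (j : Fin r) :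
    ∑ a, (U a j) ^ 2 = 1 := by
  have h := congrFun (congrFun hU j) j
  simp only [Matrix.mul_apply, Matrix.transpose_apply, Matrix.one_apply_eq] at h
  simpa [sq] using h

/-- **Lemma 1 (spectral-norm proximal subproblem).** If `C = UΣVᵀ` is an SVD of `C`
with singular values `σ_1 ≥ … ≥ σ_r ≥ 0` and `λ > 0`, then
`min_B { ‖B - C‖_F² + λ‖B‖₂ } = min_{t ≥ 0} { ∑_j max(σ_j - t, 0)² + λt }`, and for any
minimizer `t*` of the right-hand side the matrix `B̂ = U diag(min(σ_j, t*)) Vᵀ` attains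
the left-hand minimum. -/
theorem stmt_8 {m n r : ℕ} (hm : 0 < m) (hn : 0 < n) (hr : 0 < r)
    (hrmn : r ≤ min m n)
    (U : Matrix (Fin m) (Fin r) ℝ) (V : Matrix (Fin n) (Fin r) ℝ)
    (hU : Uᵀ * U = 1) (hV : Vᵀ * V = 1)
    (σ : Fin r → ℝ) (hσ : Antitone σ) (hσ0 : ∀ j, 0 ≤ σ j)
    (C : Matrix (Fin m) (Fin n) ℝ) (hC : C = U * Matrix.diagonal σ * Vᵀ)
    (lam : ℝ) (hlam : 0 < lam)
    (tstar : ℝ) (htnn : 0 ≤ tstar)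
    (ht : ∀ t, 0 ≤ t →
      ∑ j, max (σ j - tstar) 0 ^ 2 + lam * tstar ≤ ∑ j, max (σ j - t) 0 ^ 2 + lam * t) :
    IsLeast
      { y : ℝ | ∃ B : Matrix (Fin m) (Fin n) ℝ, y = frobNorm (B - C) ^ 2 + lam * specNorm B }
      (∑ j, max (σ j - tstar) 0 ^ 2 + lam * tstar) ∧
    frobNorm (U * Matrix.diagonal (fun j => min (σ j) tstar) * Vᵀ - C) ^ 2
        + lam * specNorm (U * Matrix.diagonal (fun j => min (σ j) tstar) * Vᵀ)
      = ∑ j, max (σ j - tstar) 0 ^ 2 + lam * tstar := by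
  set j0 : Fin r := ⟨0, hr⟩ with hj0
  set d : Fin r → ℝ := fun j => min (σ j) tstar with hd
  set Bhat : Matrix (Fin m) (Fin n) ℝ := U * Matrix.diagonal d * Vᵀ with hBhat
  -- t* ≤ σ j0
  have hts : tstar ≤ σ j0 := by
    have h := ht (σ j0) (hσ0 j0)
    have hz : ∑ j, max (σ j - σ j0) 0 ^ 2 = 0 := by
      apply Finset.sum_eq_zero; intro j _
      have : σ j ≤ σ j0 := hσ (by exact Fin.mk_le_mk.mpr (Nat.zero_le j.1))
      have : max (σ j - σ j0) 0 = 0 := max_eq_right (by linarith)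
      rw [this]; ring
    rw [hz, zero_add] at h
    have hsum : 0 ≤ ∑ j, max (σ j - tstar) 0 ^ 2 :=
      Finset.sum_nonneg fun j _ => sq_nonneg _
    nlinarith
  have hdj0 : d j0 = tstar := min_eq_right hts
  have hd_nonneg : ∀ j, 0 ≤ d j := fun j => le_min (hσ0 j) htnn
  have hd_le : ∀ j, d j ≤ tstar := fun j => min_le_right _ _
  -- spectral norm of Bhat = tstar
  have hspec_le : specNorm Bhat ≤ tstar := by
    apply specNorm_le _ _ htnn
    intro v
    have e1 : Bhat *ᵥ v = U *ᵥ (Matrix.diagonal d *ᵥ (Vᵀ *ᵥ v)) := by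
      rw [Matrix.mulVec_mulVec, Matrix.mulVec_mulVec]
    rw [e1, mulVec_isom U hU]
    set y := Vᵀ *ᵥ v with hy
    have e2 : ∀ j, ((Matrix.diagonal d *ᵥ y) j) ^ 2 ≤ tstar ^ 2 * (y j) ^ 2 := by
      intro j
      rw [Matrix.mulVec_diagonal]
      have h1 : (d j) ^ 2 ≤ tstar ^ 2 := pow_le_pow_left₀ (hd_nonneg j) (hd_le j) 2
      calc (d j * y j) ^ 2 = (d j) ^ 2 * (y j) ^ 2 := by ring
        _ ≤ tstar ^ 2 * (y j) ^ 2 := by nlinarith [sq_nonneg (y j)]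
    calc ∑ j, ((Matrix.diagonal d *ᵥ y) j) ^ 2 ≤ ∑ j, tstar ^ 2 * (y j) ^ 2 :=
          Finset.sum_le_sum fun j _ => e2 j
      _ = tstar ^ 2 * ∑ j, (y j) ^ 2 := by rw [Finset.mul_sum]
      _ ≤ tstar ^ 2 * ∑ b, (v b) ^ 2 :=
          mul_le_mul_of_nonneg_left (proj_bound V hV v) (sq_nonneg _)
  have hmid : Uᵀ * Bhat * V = Matrix.diagonal d := by
    rw [hBhat]
    calc Uᵀ * (U * Matrix.diagonal d * Vᵀ) * V
        = (Uᵀ * U) * Matrix.diagonal d * (Vᵀ * V) := by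
          simp only [Matrix.mul_assoc]
      _ = Matrix.diagonal d := by rw [hU, hV, Matrix.one_mul, Matrix.mul_one]
  have hspec_ge : tstar ≤ specNorm Bhat := by
    have hdot : (fun a => U a j0) ⬝ᵥ (Bhat *ᵥ (fun b => V b j0)) = tstar := by
      rw [← entry_dot, hmid, Matrix.diagonal_apply_eq, hdj0]
    have := dot_le_specNorm Bhat (fun a => U a j0) (fun b => V b j0)
      (col_unit U hU j0) (col_unit V hV j0)
    rwa [hdot] at this
  have hspec : specNorm Bhat = tstar := le_antisymm hspec_le hspec_ge
  -- frobenius part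
  have hdiff : Bhat - C = U * Matrix.diagonal (fun j => d j - σ j) * Vᵀ := by
    rw [hBhat, hC, ← Matrix.diagonal_sub]
    rw [← Matrix.sub_mul, ← Matrix.mul_sub]
  have hfrob : frobNorm (Bhat - C) ^ 2 = ∑ j, max (σ j - tstar) 0 ^ 2 := by
    rw [hdiff, frob_sq, conj_sumsq U V hU hV, diag_sumsq]
    apply Finset.sum_congr rfl; intro j _
    rcases le_total (σ j) tstar with h | h
    · rw [hd]; simp only [min_eq_left h]
      rw [max_eq_right (by linarith)]; ring
    · rw [hd]; simp only [min_eq_right h]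
      rw [max_eq_left (by linarith)]; ring
  have hmain : frobNorm (Bhat - C) ^ 2 + lam * specNorm Bhat
      = ∑ j, max (σ j - tstar) 0 ^ 2 + lam * tstar := by
    rw [hfrob, hspec]
  refine ⟨⟨⟨Bhat, hmain.symm⟩, ?_⟩, hmain⟩
  -- lower bound
  rintro y ⟨B, rfl⟩
  set t := specNorm B with htdef
  have ht0 : 0 ≤ t := norm_nonneg _
  set c : Fin r → ℝ := fun j => (Uᵀ * (C - B) * V) j j with hcdef
  have hCv : Uᵀ * C * V = Matrix.diagonal σ := by
    rw [hC]
    calc Uᵀ * (U * Matrix.diagonal σ * Vᵀ) * V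
        = (Uᵀ * U) * Matrix.diagonal σ * (Vᵀ * V) := by simp only [Matrix.mul_assoc]
      _ = Matrix.diagonal σ := by rw [hU, hV, Matrix.one_mul, Matrix.mul_one]
  have hcj : ∀ j, c j = σ j - (Uᵀ * B * V) j j := by
    intro j
    have : Uᵀ * (C - B) * V = Uᵀ * C * V - Uᵀ * B * V := by
      rw [Matrix.mul_sub, Matrix.sub_mul]
    rw [hcdef]; simp only [this, Matrix.sub_apply, hCv, Matrix.diagonal_apply_eq]
  have hjb : ∀ j, (Uᵀ * B * V) j j ≤ t := by
    intro j
    rw [entry_dot]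
    exact dot_le_specNorm B _ _ (col_unit U hU j) (col_unit V hV j)
  have hmax : ∀ j, max (σ j - t) 0 ^ 2 ≤ (c j) ^ 2 := by
    intro j
    have h1 : σ j - t ≤ c j := by rw [hcj j]; linarith [hjb j]
    have h2 : max (σ j - t) 0 ≤ |c j| :=
      max_le (h1.trans (le_abs_self _)) (abs_nonneg _)
    calc max (σ j - t) 0 ^ 2 ≤ |c j| ^ 2 :=
          pow_le_pow_left₀ (le_max_right _ _) h2 2
      _ = (c j) ^ 2 := sq_abs _
  have hb : ∑ j, max (σ j - t) 0 ^ 2 ≤ frobNorm (B - C) ^ 2 := by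
    have h1 : ∑ j, (c j) ^ 2 ≤ ∑ a, ∑ b, ((C - B) a b) ^ 2 :=
      bessel U V hU hV (C - B)
    have h2 : ∑ a, ∑ b, ((C - B) a b) ^ 2 = ∑ a, ∑ b, ((B - C) a b) ^ 2 := by
      apply Finset.sum_congr rfl; intro a _
      apply Finset.sum_congr rfl; intro b _
      simp only [Matrix.sub_apply]; ring
    rw [frob_sq]
    calc ∑ j, max (σ j - t) 0 ^ 2 ≤ ∑ j, (c j) ^ 2 :=
          Finset.sum_le_sum fun j _ => hmax j
      _ ≤ ∑ a, ∑ b, ((C - B) a b) ^ 2 := h1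
      _ = _ := h2
  calc ∑ j, max (σ j - tstar) 0 ^ 2 + lam * tstar
      ≤ ∑ j, max (σ j - t) 0 ^ 2 + lam * t := ht t ht0
    _ ≤ frobNorm (B - C) ^ 2 + lam * t := by linarith
    _ = frobNorm (B - C) ^ 2 + lam * specNorm B := rfl
end

section
/- Let σ_1 ≥ σ_2 ≥ … ≥ σ_r ≥ 0 and λ > 0. Then inf_{s ∈ ℝ^r} { ∑_{j=1}^r (s_j − σ_j)² + λ max_{1≤j≤r} |s_j| } = min_{t ≥ 0} { ∑_{j=1}^r (max(σ_j − t, 0))² + λt }, and for any t* attaining the right-hand minimum, the vector s* with s*_j = min(σ_j, t*) attains the left-hand infimum. -/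
/-- **Scalar clamping reduction (final step of Lemma 1).** For `σ_1 ≥ … ≥ σ_r ≥ 0` and
`λ > 0`, `inf_s { ∑_j (s_j - σ_j)² + λ max_j |s_j| } = min_{t ≥ 0} { ∑_j max(σ_j - t,0)² + λt }`,
and for any minimizer `t*` of the right-hand side, the clamped vector
`s*_j = min(σ_j, t*)` attains the left-hand infimum. -/
theorem stmt_11 {r : ℕ} (hr : 0 < r)
    (σ : Fin r → ℝ) (hσ : Antitone σ) (hσ0 : ∀ j, 0 ≤ σ j)
    (lam : ℝ) (hlam : 0 < lam)
    (tstar : ℝ) (htnn : 0 ≤ tstar)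
    (ht : ∀ t, 0 ≤ t →
      ∑ j, max (σ j - tstar) 0 ^ 2 + lam * tstar ≤ ∑ j, max (σ j - t) 0 ^ 2 + lam * t) :
    IsLeast
      { y : ℝ | ∃ s : Fin r → ℝ, y = ∑ j, (s j - σ j) ^ 2 + lam * ⨆ j, |s j| }
      (∑ j, max (σ j - tstar) 0 ^ 2 + lam * tstar) ∧
    ∑ j, (min (σ j) tstar - σ j) ^ 2 + lam * (⨆ j, |min (σ j) tstar|)
      = ∑ j, max (σ j - tstar) 0 ^ 2 + lam * tstar := by
  obtain ⟨j0, hj0⟩ : ∃ j : Fin r, j.val = 0 := ⟨⟨0, hr⟩, rfl⟩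
  have : Nonempty (Fin r) := ⟨j0⟩
  -- t* ≤ σ j0
  have hts : tstar ≤ σ j0 := by
    have h1 := ht (σ j0) (hσ0 j0)
    have h2 : ∑ j, max (σ j - σ j0) 0 ^ 2 = 0 := by
      apply Finset.sum_eq_zero
      intro j _
      have : σ j ≤ σ j0 := hσ (Fin.le_def.mpr (by omega))
      have : max (σ j - σ j0) 0 = 0 := max_eq_right (by linarith)
      rw [this]; ring
    have h3 : (0:ℝ) ≤ ∑ j, max (σ j - tstar) 0 ^ 2 :=
      Finset.sum_nonneg fun j _ => sq_nonneg _
    rw [h2] at h1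
    nlinarith
  -- pointwise equality of squares
  have hsq : ∀ j, (min (σ j) tstar - σ j) ^ 2 = max (σ j - tstar) 0 ^ 2 := by
    intro j
    rcases le_total (σ j) tstar with h | h
    · rw [min_eq_left h, max_eq_right (by linarith)]; ring
    · rw [min_eq_right h, max_eq_left (by linarith)]; ring
  -- sup of clamped vector
  have hsup : (⨆ j, |min (σ j) tstar|) = tstar := by
    apply le_antisymm
    · apply ciSup_le
      intro j
      rw [abs_of_nonneg (le_min (hσ0 j) htnn)]
      exact min_le_right _ _
    · have := le_ciSup (f := fun j => |min (σ j) tstar|)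
        (Set.Finite.bddAbove (Set.finite_range _)) j0
      rwa [min_eq_right hts, abs_of_nonneg htnn] at this
  have heq : ∑ j, (min (σ j) tstar - σ j) ^ 2 + lam * (⨆ j, |min (σ j) tstar|)
      = ∑ j, max (σ j - tstar) 0 ^ 2 + lam * tstar := by
    rw [hsup]
    congr 1
    exact Finset.sum_congr rfl fun j _ => hsq j
  refine ⟨⟨⟨fun j => min (σ j) tstar, heq.symm⟩, ?_⟩, heq⟩
  rintro y ⟨s, rfl⟩
  set t := ⨆ j, |s j| with ht'
  have hbdd : BddAbove (Set.range fun j => |s j|) :=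
    Set.Finite.bddAbove (Set.finite_range _)
  have hst : ∀ j, |s j| ≤ t := fun j => le_ciSup hbdd j
  have htn : 0 ≤ t := le_trans (abs_nonneg _) (hst j0)
  have key : ∀ j, max (σ j - t) 0 ^ 2 ≤ (s j - σ j) ^ 2 := by
    intro j
    rcases le_total (σ j) t with h | h
    · rw [max_eq_right (by linarith)]
      simpa using sq_nonneg (s j - σ j)
    · rw [max_eq_left (by linarith)]
      have : s j ≤ t := le_trans (le_abs_self _) (hst j)
      nlinarith [sq_nonneg (s j - σ j), sq_nonneg (t - s j)]
  calc ∑ j, max (σ j - tstar) 0 ^ 2 + lam * tstar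
      ≤ ∑ j, max (σ j - t) 0 ^ 2 + lam * t := ht t htn
    _ ≤ ∑ j, (s j - σ j) ^ 2 + lam * t := by
        have := Finset.sum_le_sum (fun j _ => key j) (s := Finset.univ)
        linarith
    _ = ∑ j, (s j - σ j) ^ 2 + lam * ⨆ j, |s j| := rfl
end
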